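/- arXiv:2104.03932 — 4 statements merged into one kernel-verified Lean document; each statement's English description precedes it below -/
import Mathlib

section
/- Let $\ell : E \to \mathbb{Z}_{\ge 1}$ be an assignment of positive integer lengths to the edges of a graph $G$, with capacity $\gamma = \sum_{e \in E}(\ell_e - 1)$ and such that the $\ell$-distance between two designated vertex sets $S$ and $T$ is at least $\beta$. Then for any real $c \ge 1$, the assignment $\hat{\ell}_e := 1 + \lfloor (\ell_e - 1)/c \rfloor$ has capacity at most $\gamma/c$ and the $\hat{\ell}$-distance between $S$ and $T$ is at least $\beta/(1+c)$. -/
/-!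
Writing `x - 1 = c q + r` with `q = ⌊(x - 1)/c⌋ ≥ 0` and `0 ≤ r < c`, the scaled length `1 + q`
loses at most a factor `c` of the excess `x - 1` (this gives the capacity bound), while
`x = 1 + c q + r < (1 + c)(1 + q)` bounds every edge, hence every walk, by `1 + c` times its
scaled length (this gives the distance bound).
-/

namespace MovingCut

noncomputable def scaledLength (c : ℝ) (x : ℤ) : ℤ := 1 + ⌊((x : ℝ) - 1) / c⌋

theorem scaledLength_sub_one_le (c : ℝ) (x : ℤ) :
    ((scaledLength c x : ℝ) - 1) ≤ ((x : ℝ) - 1) / c := by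
  simpa [scaledLength] using Int.floor_le (((x : ℝ) - 1) / c)

theorem le_one_add_mul_scaledLength {c : ℝ} (hc : 0 < c) {x : ℤ} (hx : 1 ≤ x) :
    (x : ℝ) ≤ (1 + c) * scaledLength c x := by
  set q : ℝ := (⌊((x : ℝ) - 1) / c⌋ : ℝ)
  have hq : 0 ≤ q := Int.cast_nonneg_iff.mpr <|
    Int.floor_nonneg.mpr <| div_nonneg (by exact_mod_cast Int.sub_nonneg.mpr hx) hc.le
  have hlt : (x : ℝ) - 1 < c * (q + 1) := by
    rw [← div_lt_iff₀' hc]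
    linarith [Int.sub_one_lt_floor (((x : ℝ) - 1) / c)]
  simp only [scaledLength, Int.cast_add, Int.cast_one]
  nlinarith

theorem sum_sub_one_scaledLength_le {ι : Type*} (s : Finset ι) (ℓ : ι → ℤ) (c : ℝ) :
    ((∑ i ∈ s, (scaledLength c (ℓ i) - 1) : ℤ) : ℝ) ≤ ((∑ i ∈ s, (ℓ i - 1) : ℤ) : ℝ) / c := by
  push_cast
  rw [Finset.sum_div]
  exact Finset.sum_le_sum fun i _ => scaledLength_sub_one_le c (ℓ i)

end MovingCut

theorem List.cast_sum_map_le_mul {α : Type*} {l : List α} {f g : α → ℤ} {k : ℝ}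
    (h : ∀ a ∈ l, (f a : ℝ) ≤ k * g a) :
    (((l.map f).sum : ℤ) : ℝ) ≤ k * (((l.map g).sum : ℤ) : ℝ) := by
  simp only [Int.cast_list_sum, List.map_map, ← List.sum_map_mul_left]
  exact List.sum_le_sum h

open MovingCut in
/-- Scaling a moving cut: if `ℓ` has capacity `γ` and `ℓ`-distance at least `β`
between vertex sets `S` and `T`, then `ℓ'ₑ = 1 + ⌊(ℓₑ - 1)/c⌋` has capacity at
most `γ/c` and distance at least `β/(1+c)`. -/
theorem moving_cut_scaling {V : Type*} [Fintype V] [DecidableEq V]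
    (G : SimpleGraph V) [DecidableRel G.Adj]
    (ℓ : Sym2 V → ℤ) (hℓ : ∀ e ∈ G.edgeSet, 1 ≤ ℓ e)
    (S T : Set V) (β c : ℝ) (hc : 1 ≤ c)
    (hdist : ∀ s ∈ S, ∀ t ∈ T, ∀ p : G.Walk s t,
      β ≤ (((p.edges.map ℓ).sum : ℤ) : ℝ))
    (ℓ' : Sym2 V → ℤ)
    (hℓ' : ∀ e, ℓ' e = 1 + ⌊((ℓ e : ℝ) - 1) / c⌋) :
    ((∑ e ∈ G.edgeFinset, (ℓ' e - 1) : ℤ) : ℝ) ≤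
      ((∑ e ∈ G.edgeFinset, (ℓ e - 1) : ℤ) : ℝ) / c ∧
    ∀ s ∈ S, ∀ t ∈ T, ∀ p : G.Walk s t,
      β / (1 + c) ≤ (((p.edges.map ℓ').sum : ℤ) : ℝ) := by
  obtain rfl : ℓ' = fun e => scaledLength c (ℓ e) := funext hℓ'
  have hc₀ : 0 < c := by linarith
  refine ⟨sum_sub_one_scaledLength_le _ ℓ c, fun s hs t ht p => ?_⟩
  have hwalk : (((p.edges.map ℓ).sum : ℤ) : ℝ) ≤
      (1 + c) * (((p.edges.map fun e => scaledLength c (ℓ e)).sum : ℤ) : ℝ) :=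
    List.cast_sum_map_le_mul fun e he =>
      le_one_add_mul_scaledLength hc₀ (hℓ e (p.edges_subset_edgeSet he))
  rw [div_le_iff₀' (by linarith)]
  exact (hdist s hs t ht p).trans hwalk
end

section
/- Let $R$ be a connected graph on $k \ge 3$ vertices, let $H = \{v : \deg_R(v) \ge 3\}$, and suppose $|\Gamma^+_R(H)| \le k/10$. Let $O$ be the set of vertices at $R$-distance at least 10 from $H$. Then $|O| \ge k/10$. -/
/-!
Layer the vertices by their distance `j` to `H`. A vertex at distance `j ≥ 1` lies outside `H`,
so it has degree at most two, and one of its neighbours is at distance `j - 1`; hence it has at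
most one neighbour at distance `j + 1`. Every vertex at distance `j + 1` has a neighbour at
distance `j`, so the layers `1, 2, 3, …` have non-increasing sizes. Layers `0` and `1` together
lie in the closed neighbourhood of `H`, and each of the layers `2, …, 9` is at most as large as
layer `1`, so the layers `0, …, 9` contain at most `9 |Γ⁺(H)| ≤ 9k/10` vertices; the rest are at
distance at least `10`.
-/

open Finset

namespace SimpleGraph

variable {V : Type*} {G : SimpleGraph V}

lemma Adj.dist_le_dist_add_one {v u : V} (hadj : G.Adj v u) (w : V) :
    G.dist v w ≤ G.dist u w + 1 := by
  have := hadj.reachable.dist_triangle_left w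
  rw [dist_eq_one_iff_adj.mpr hadj] at this
  omega

lemma exists_adj_dist_eq_of_dist_eq_succ {v w : V} {n : ℕ} (hd : G.dist v w = n + 1) :
    ∃ u, G.Adj v u ∧ G.dist u w = n := by
  obtain ⟨p, hp⟩ :=
    (Reachable.of_dist_ne_zero (hd.trans_ne n.succ_ne_zero)).exists_walk_length_eq_dist
  cases p with
  | nil => simp at hd
  | @cons _ u _ hadj q =>
    simp only [Walk.length_cons] at hp
    have := hadj.dist_le_dist_add_one w
    exact ⟨u, hadj, le_antisymm (by have := G.dist_le q; omega) (by omega)⟩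

variable (G) in
def closedNeighborFinset [Fintype V] [DecidableEq V] [DecidableRel G.Adj] (H : Finset V) :
    Finset V :=
  H ∪ ({v | ∃ h ∈ H, G.Adj v h} : Finset V)

variable (G) in
noncomputable def infDist {H : Finset V} (hH : H.Nonempty) (v : V) : ℕ :=
  H.inf' hH (G.dist v)

section infDist

variable {H : Finset V} {hH : H.Nonempty} {v u : V}

lemma infDist_le {h : V} (hh : h ∈ H) : G.infDist hH v ≤ G.dist v h :=
  inf'_le _ hh

variable (G hH v) in
lemma exists_mem_infDist_eq : ∃ h ∈ H, G.infDist hH v = G.dist v h :=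
  exists_mem_eq_inf' hH _

lemma le_infDist_iff {n : ℕ} : n ≤ G.infDist hH v ↔ ∀ h ∈ H, n ≤ G.dist v h :=
  le_inf'_iff hH _

lemma Connected.infDist_eq_zero_iff (hG : G.Connected) : G.infDist hH v = 0 ↔ v ∈ H := by
  refine ⟨fun hv => ?_, fun hv => Nat.eq_zero_of_le_zero ((infDist_le hv).trans_eq G.dist_self)⟩
  obtain ⟨h, hh, hvh⟩ := exists_mem_infDist_eq G hH v
  rw [hvh, hG.dist_eq_zero_iff] at hv
  rwa [hv]

lemma Adj.infDist_le_infDist_add_one (hadj : G.Adj v u) :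
    G.infDist hH v ≤ G.infDist hH u + 1 := by
  obtain ⟨h, hh, huh⟩ := exists_mem_infDist_eq G hH u
  rw [huh]
  exact (infDist_le hh).trans (hadj.dist_le_dist_add_one h)

lemma exists_adj_infDist_eq_of_infDist_eq_succ {n : ℕ} (hv : G.infDist hH v = n + 1) :
    ∃ u, G.Adj v u ∧ G.infDist hH u = n := by
  obtain ⟨h, hh, hvh⟩ := exists_mem_infDist_eq G hH v
  obtain ⟨u, hadj, hu⟩ := exists_adj_dist_eq_of_dist_eq_succ (hvh ▸ hv)
  have := hadj.infDist_le_infDist_add_one (hH := hH)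
  exact ⟨u, hadj, le_antisymm (hu ▸ infDist_le hh) (by omega)⟩

section card

variable [Fintype V]

lemma card_infDist_lt (n : ℕ) :
    #{v | G.infDist hH v < n} = ∑ j ∈ range n, #{v | G.infDist hH v = j} := by
  rw [card_eq_sum_card_fiberwise (f := G.infDist hH) (t := range n) fun v hv => by simpa using hv]
  refine sum_congr rfl fun j hj => ?_
  rw [filter_filter]
  congr 1
  ext v
  simp only [mem_range] at hj
  simp only [mem_filter, mem_univ, true_and]
  omega

variable [DecidableRel G.Adj]

lemma Connected.card_infDist_eq_add_two_le (hG : G.Connected) (hdeg : ∀ v ∉ H, G.degree v ≤ 2)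
    (j : ℕ) : #{v | G.infDist hH v = j + 2} ≤ #{v | G.infDist hH v = j + 1} := by
  classical
  refine card_le_card_of_forall_subsingleton G.Adj (fun a ha => ?_) (fun b hb => ?_)
  · obtain ⟨u, hadj, hu⟩ := exists_adj_infDist_eq_of_infDist_eq_succ (mem_filter.mp ha).2
    exact ⟨u, mem_filter.mpr ⟨mem_univ u, hu⟩, hadj⟩
  · have hb : G.infDist hH b = j + 1 := (mem_filter.mp hb).2
    obtain ⟨w, hbw, hw⟩ := exists_adj_infDist_eq_of_infDist_eq_succ hb
    -- `b ∉ H` has at most two neighbours, one of which is `w`, one level down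
    have hdegb : #((G.neighborFinset b).erase w) ≤ 1 := by
      have := hdeg b ((hG.infDist_eq_zero_iff).not.mp (by omega))
      rw [card_erase_of_mem ((G.mem_neighborFinset b w).mpr hbw), card_neighborFinset_eq_degree]
      omega
    have hup {a : V} (ha : G.infDist hH a = j + 2) (hab : G.Adj a b) :
        a ∈ (G.neighborFinset b).erase w :=
      mem_erase.mpr ⟨by rintro rfl; omega, (G.mem_neighborFinset b a).mpr hab.symm⟩
    rintro a₁ ⟨ha₁, hab₁⟩ a₂ ⟨ha₂, hab₂⟩
    exact card_le_one.mp hdegb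
      a₁ (hup (mem_filter.mp ha₁).2 hab₁) a₂ (hup (mem_filter.mp ha₂).2 hab₂)

lemma Connected.card_infDist_eq_add_one_le (hG : G.Connected) (hdeg : ∀ v ∉ H, G.degree v ≤ 2)
    (j : ℕ) : #{v | G.infDist hH v = j + 1} ≤ #{v | G.infDist hH v = 1} := by
  induction j with
  | zero => rfl
  | succ j ih => exact (hG.card_infDist_eq_add_two_le hdeg j).trans ih

lemma Connected.card_infDist_eq_zero_add_card_infDist_eq_one_le [DecidableEq V]
    (hG : G.Connected) :
    #{v | G.infDist hH v = 0} + #{v | G.infDist hH v = 1} ≤ #(G.closedNeighborFinset H) := by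
  rw [← card_union_of_disjoint (disjoint_filter.mpr fun _ _ h => by omega)]
  refine card_le_card fun v hv => ?_
  simp only [mem_union, mem_filter, mem_univ, true_and] at hv
  simp only [closedNeighborFinset, mem_union, mem_filter, mem_univ, true_and]
  rcases hv with hv | hv
  · exact .inl (hG.infDist_eq_zero_iff.mp hv)
  · obtain ⟨u, hadj, hu⟩ := exists_adj_infDist_eq_of_infDist_eq_succ (zero_add 1 ▸ hv)
    exact .inr ⟨u, hG.infDist_eq_zero_iff.mp hu, hadj⟩

lemma Connected.sum_card_infDist_eq_le [DecidableEq V] (hG : G.Connected)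
    (hdeg : ∀ v ∉ H, G.degree v ≤ 2) (n : ℕ) :
    ∑ j ∈ range (n + 2), #{v | G.infDist hH v = j} ≤
      (n + 1) * #(G.closedNeighborFinset H) := by
  have hnear := hG.card_infDist_eq_zero_add_card_infDist_eq_one_le (hH := hH)
  induction n with
  | zero => simpa [sum_range_succ] using hnear
  | succ n ih =>
    have hlast : #{v | G.infDist hH v = n + 2} ≤ #{v | G.infDist hH v = 1} :=
      hG.card_infDist_eq_add_one_le hdeg (n + 1)
    rw [sum_range_succ, add_mul, one_mul]
    omega

end card

end infDist

end SimpleGraph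

theorem far_vertices_many_general {V : Type*} [Fintype V] [DecidableEq V]
    (R : SimpleGraph V) [DecidableRel R.Adj] (hconn : R.Connected)
    (k : ℕ) (hk : Fintype.card V = k)
    (H : Finset V) (hH : H = Finset.univ.filter (fun v => 3 ≤ R.degree v))
    (hsmall : 10 * (H ∪ Finset.univ.filter (fun v => ∃ h ∈ H, R.Adj v h)).card ≤ k)
    (O : Finset V) (hO : ∀ v, v ∈ O ↔ ∀ h ∈ H, 10 ≤ R.dist v h) :
    k ≤ 10 * O.card := by
  rcases H.eq_empty_or_nonempty with rfl | hne
  · have : O = univ := eq_univ_of_forall fun v => by simp [hO]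
    rw [this, card_univ, hk]
    omega
  have hdeg : ∀ v ∉ H, R.degree v ≤ 2 := fun v hv => by
    simp only [hH, mem_filter, mem_univ, true_and, not_le] at hv
    omega
  have hnear : #{v | R.infDist hne v < 10} ≤ 9 * #(R.closedNeighborFinset H) :=
    (SimpleGraph.card_infDist_lt 10).trans_le (hconn.sum_card_infDist_eq_le hdeg 8)
  have hfar : O = ({v | ¬R.infDist hne v < 10} : Finset V) := by
    ext v
    simp only [hO, mem_filter, mem_univ, true_and, not_lt, SimpleGraph.le_infDist_iff]
  have hsplit := card_filter_add_card_filter_not (s := univ) (fun v => R.infDist hne v < 10)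
  rw [← hfar, card_univ, hk] at hsplit
  change 10 * #(R.closedNeighborFinset H) ≤ k at hsmall
  omega

/-- If the closed neighborhood of the set `H` of vertices of degree ≥ 3 in a
connected graph `R` on `k ≥ 3` vertices has size at most `k/10`, then the set
`O` of vertices at distance at least `10` from `H` has size at least `k/10`. -/
theorem far_vertices_many {V : Type*} [Fintype V] [DecidableEq V]
    (R : SimpleGraph V) [DecidableRel R.Adj] (hconn : R.Connected)
    (k : ℕ) (hk : Fintype.card V = k) (h3 : 3 ≤ k)
    (H : Finset V) (hH : H = Finset.univ.filter (fun v => 3 ≤ R.degree v))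
    (hsmall : 10 * (H ∪ Finset.univ.filter (fun v => ∃ h ∈ H, R.Adj v h)).card ≤ k)
    (O : Finset V) (hO : ∀ v, v ∈ O ↔ ∀ h ∈ H, 10 ≤ R.dist v h) :
    k ≤ 10 * O.card :=
  far_vertices_many_general R hconn k hk H hH hsmall O hO
end

section
/- Let $G$ be a graph of diameter $D$ and let $f = (f_0, f_1, \dots, f_\ell)$ be a simple path in the contraction graph $R$ (of some vertex-disjoint paths $\{p_i\}$) with $\ell \ge 9$ such that every vertex on $f$ has $R$-degree at most 2. Then there exists a simple path $w'$ in $G$ of hop-length at most $D$ whose projection to $R$ is supported on $f$ and intersects exactly $x+1$ of the part-paths, where $x = 3\lceil \ell/9 \rceil - 1$; moreover the intersected parts are consecutive along $f$. -/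
/-!
Project a path `q` of `G` to the walk in `R` of the parts it meets. An interior vertex of `f`
has degree two in `R`, so both of its `R`-neighbours already lie on `f`: the projection can leave
the interior of `f` only through an end `f 0` or `f ℓ`, and on a stretch of `f` that misses one
end it moves by ±1 along `f`. It therefore meets every part between two parts it meets (a discrete
intermediate value theorem), and clipping `q` between its last visit to `f j` and the first
subsequent visit to `f (j + x)` leaves a subpath meeting exactly `f j, …, f (j + x)`. Take `q` a
shortest path from `f x` to `f (2x)`: either it stays in the interior of `f` and we clip at
`j = x`, or its part before it first reaches `f 0` (resp. `f ℓ`) is clipped at `j = 0`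
(resp. `j = ℓ - x`); `2x ≤ ℓ` leaves room for all three.
-/

open Set Function

namespace SimpleGraph

variable {V ι : Type*} {G : SimpleGraph V}

namespace Walk

lemma exists_eq_append_first_hit {u v : V} (w : G.Walk u v) {A : V → Prop}
    (h : ∃ z ∈ w.support, A z) :
    ∃ (a : V) (w₁ : G.Walk u a) (w₂ : G.Walk a v),
      w = w₁.append w₂ ∧ A a ∧ ∀ z ∈ w₁.support, A z → z = a := by
  induction w with
  | nil =>
    obtain ⟨z, hz, hzA⟩ := h
    rw [support_nil, List.mem_singleton] at hz
    subst hz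
    exact ⟨_, nil, nil, rfl, hzA, by simp⟩
  | @cons a _ _ hadj w ih =>
    by_cases ha : A a
    · exact ⟨a, nil, cons hadj w, rfl, ha, by simp⟩
    have hw : ∃ z ∈ w.support, A z := by
      obtain ⟨z, hz, hzA⟩ := h
      rw [support_cons, List.mem_cons] at hz
      exact ⟨z, hz.resolve_left fun hza => ha (hza ▸ hzA), hzA⟩
    obtain ⟨a', w₁, w₂, rfl, ha', hfirst⟩ := ih hw
    refine ⟨a', cons hadj w₁, w₂, rfl, ha', fun z hz hzA => ?_⟩
    rw [support_cons, List.mem_cons] at hz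
    exact hz.elim (fun hza => absurd (hza ▸ hzA) ha) (hfirst z · hzA)

lemma exists_eq_append_last_hit {u v : V} (w : G.Walk u v) {A : V → Prop}
    (h : ∃ z ∈ w.support, A z) :
    ∃ (a : V) (w₁ : G.Walk u a) (w₂ : G.Walk a v),
      w = w₁.append w₂ ∧ A a ∧ ∀ z ∈ w₂.support, A z → z = a := by
  obtain ⟨a, w₁, w₂, heq, ha, hfirst⟩ :=
    w.reverse.exists_eq_append_first_hit (by simpa only [support_reverse, List.mem_reverse])
  refine ⟨a, w₂.reverse, w₁.reverse, ?_, ha, fun z hz => hfirst z (by simpa using hz)⟩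
  rw [← reverse_append, ← heq, reverse_reverse]

/-- The vertex set of the projection of `w` to the contraction graph of the parts `P i`. -/
def partsMet (P : ι → Set V) {u v : V} (w : G.Walk u v) : Set ι :=
  {i | ∃ z ∈ w.support, z ∈ P i}

variable {P : ι → Set V} {u v w : V}

lemma mem_partsMet {q : G.Walk u v} {i : ι} : i ∈ partsMet P q ↔ ∃ z ∈ q.support, z ∈ P i :=
  Iff.rfl

lemma partsMet_append (q : G.Walk u v) (r : G.Walk v w) :
    partsMet P (q.append r) = partsMet P q ∪ partsMet P r := by
  ext i
  simp only [mem_partsMet, mem_support_append_iff, mem_union]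
  grind

lemma partsMet_reverse (q : G.Walk u v) : partsMet P q.reverse = partsMet P q := by
  ext i
  simp only [mem_partsMet, support_reverse, List.mem_reverse]

end Walk

open Walk

def ContainsContraction (G : SimpleGraph V) (P : ι → Set V) (R : SimpleGraph ι) : Prop :=
  ∀ ⦃i j : ι⦄ ⦃a b : V⦄ (w : G.Walk a b), i ≠ j → a ∈ P i → b ∈ P j →
    (∀ v ∈ w.support, v ≠ a → v ≠ b → ∀ y, v ∉ P y) → R.Adj i j

structure IsChordlessOn (R : SimpleGraph ι) (f : ℕ → ι) (I : Set ℕ) : Prop where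
  injOn : InjOn f I
  consecutive_of_adj : ∀ ⦃m⦄, m ∈ I → ∀ ⦃m'⦄, m' ∈ I → R.Adj (f m) (f m') →
    m' = m + 1 ∨ m = m' + 1

variable {P : ι → Set V} {R : SimpleGraph ι} {f : ℕ → ι} {I : Set ℕ}

namespace ContainsContraction

theorem exists_exit (hR : G.ContainsContraction P R) {S : Set ι} {u v : V} (w : G.Walk u v)
    {i : ι} (hi : i ∈ S) (hu : u ∈ P i) (hw : ¬partsMet P w ⊆ S) :
    ∃ (b : V) (e : ι) (w₁ : G.Walk u b) (w₂ : G.Walk b v), w = w₁.append w₂ ∧ b ∈ P e ∧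
      e ∉ S ∧ (∀ z ∈ w₁.support, z ≠ b → ∀ y, z ∈ P y → y ∈ S) ∧ ∃ i' ∈ S, R.Adj i' e := by
  have hexit : ∃ z ∈ w.support, ∃ e, z ∈ P e ∧ e ∉ S := by
    obtain ⟨e, he, heS⟩ := not_subset.1 hw
    obtain ⟨z, hz, hze⟩ := mem_partsMet.1 he
    exact ⟨z, hz, e, hze, heS⟩
  obtain ⟨b, w₁, w₂, rfl, ⟨e, hbe, heS⟩, hfirst⟩ := w.exists_eq_append_first_hit hexit
  have hw₁S : ∀ z ∈ w₁.support, z ≠ b → ∀ y, z ∈ P y → y ∈ S :=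
    fun z hz hzb y hzy => by_contra fun hy => hzb (hfirst z hz ⟨y, hzy, hy⟩)
  obtain ⟨a, w₀, c, rfl, ⟨i', hi'S, hai'⟩, hlast⟩ :=
    w₁.exists_eq_append_last_hit (A := fun z => ∃ i ∈ S, z ∈ P i)
      ⟨u, start_mem_support _, i, hi, hu⟩
  refine ⟨b, e, w₀.append c, w₂, rfl, hbe, heS, hw₁S, i', hi'S,
    hR c (ne_of_mem_of_not_mem hi'S heS) hai' hbe fun z hz hza hzb y hzy => ?_⟩
  exact hza (hlast z hz ⟨y, hw₁S z (by simp [hz]) hzb y hzy, hzy⟩)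

theorem mem_partsMet_of_le_of_le (hR : G.ContainsContraction P R) (hf : IsChordlessOn R f I)
    {u v : V} (w : G.Walk u v) (hwI : partsMet P w ⊆ f '' I) {α β γ : ℕ} (hα : α ∈ I)
    (hβ : β ∈ I) (hu : u ∈ P (f α)) (hv : v ∈ P (f β)) (hαγ : α ≤ γ) (hγβ : γ ≤ β) :
    f γ ∈ partsMet P w := by
  rcases hαγ.eq_or_lt with rfl | hαγ
  · exact mem_partsMet.2 ⟨u, w.start_mem_support, hu⟩
  by_contra hγ
  have hβS : f β ∉ f '' (I ∩ Iio γ) := by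
    rintro ⟨m, ⟨hm, hmγ⟩, hfm⟩
    rw [hf.injOn hm hβ hfm] at hmγ
    exact hmγ.not_ge hγβ
  obtain ⟨b, e, w₁, w₂, rfl, hbe, heS, -, -, ⟨m, ⟨hm, hmγ⟩, rfl⟩, hadj⟩ :=
    hR.exists_exit (S := f '' (I ∩ Iio γ)) w ⟨α, ⟨hα, hαγ⟩, rfl⟩ hu
      fun h => hβS (h (mem_partsMet.2 ⟨v, end_mem_support _, hv⟩))
  have hb : b ∈ (w₁.append w₂).support := by simp
  obtain ⟨m', hm', rfl⟩ := hwI (mem_partsMet.2 ⟨b, hb, hbe⟩)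
  have hγm' : γ ≤ m' := not_lt.1 fun h => heS ⟨m', ⟨hm', h⟩, rfl⟩
  rw [mem_Iio] at hmγ
  have hm'γ : m' = γ := by rcases hf.consecutive_of_adj hm hm' hadj <;> omega
  exact hγ (mem_partsMet.2 ⟨b, hb, hm'γ ▸ hbe⟩)

theorem partsMet_eq_image_Icc (hP : Pairwise (Disjoint on P)) (hR : G.ContainsContraction P R)
    (hf : IsChordlessOn R f I) {a b : V} (c : G.Walk a b) (hc : c.IsPath)
    (hcI : partsMet P c ⊆ f '' I) {j j' : ℕ} (hj : j ∈ I) (hj' : j' ∈ I) (hjj' : j ≤ j')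
    (ha : a ∈ P (f j)) (hb : b ∈ P (f j')) (hfirst : ∀ z ∈ c.support, z ∈ P (f j) → z = a)
    (hlast : ∀ z ∈ c.support, z ∈ P (f j') → z = b) :
    partsMet P c = f '' Icc j j' := by
  refine Subset.antisymm (fun i hi => ?_) ?_
  · obtain ⟨t, ht, rfl⟩ := hcI hi
    obtain ⟨z, hz, hzt⟩ := mem_partsMet.1 hi
    have hne : ∀ {s}, s ∈ I → s ≠ t → ∀ {y}, y ∈ P (f s) → y ≠ z := by
      rintro s hs hst y hy rfl
      exact hst (hf.injOn hs ht (hP.eq (not_disjoint_iff.2 ⟨y, hy, hzt⟩)))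
    obtain ⟨c₁, c₂, rfl⟩ := mem_support_iff_exists_append.1 hz
    rw [partsMet_append, union_subset_iff] at hcI
    refine ⟨t, ⟨not_lt.1 fun htj => ?_, not_lt.1 fun hj't => ?_⟩, rfl⟩
    -- after `z`, the path has to come back to `f j`, which it meets only at its start `a`
    · obtain ⟨y, hy, hyj⟩ := mem_partsMet.1
        (hR.mem_partsMet_of_le_of_le hf c₂ hcI.2 ht hj' hzt hb htj.le hjj')
      obtain rfl := hfirst y (by simp [hy]) hyj
      exact hc.ne_of_mem_support_of_append (hne hj htj.ne' hyj) c₁.start_mem_support hy rfl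
    · obtain ⟨y, hy, hyj'⟩ := mem_partsMet.1
        (hR.mem_partsMet_of_le_of_le hf c₁ hcI.1 hj ht ha hzt hjj' hj't.le)
      obtain rfl := hlast y (by simp [hy]) hyj'
      exact hc.ne_of_mem_support_of_append (hne hj' hj't.ne hyj') hy c₂.end_mem_support rfl
  · rintro _ ⟨t, ⟨hjt, htj'⟩, rfl⟩
    exact hR.mem_partsMet_of_le_of_le hf c hcI hj hj' ha hb hjt htj'

theorem exists_isPath_partsMet_eq_image_Icc (hP : Pairwise (Disjoint on P))
    (hR : G.ContainsContraction P R) (hf : IsChordlessOn R f I) [I.OrdConnected] {u v : V}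
    (w : G.Walk u v) (hw : w.IsPath) (hwI : partsMet P w ⊆ f '' I) {α β j j' : ℕ} (hα : α ∈ I)
    (hβ : β ∈ I) (hu : u ∈ P (f α)) (hv : v ∈ P (f β)) (hαj : α ≤ j) (hjj' : j ≤ j')
    (hj'β : j' ≤ β) :
    ∃ (a b : V) (c : G.Walk a b), c.IsPath ∧ c.length ≤ w.length ∧
      partsMet P c = f '' Icc j j' := by
  have hj : j ∈ I := Set.Icc_subset I hα hβ ⟨hαj, hjj'.trans hj'β⟩
  have hj' : j' ∈ I := Set.Icc_subset I hα hβ ⟨hαj.trans hjj', hj'β⟩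
  obtain ⟨b, w₁, w₂, rfl, hb, hlast⟩ := w.exists_eq_append_first_hit (A := (· ∈ P (f j')))
    (mem_partsMet.1 (hR.mem_partsMet_of_le_of_le hf w hwI hα hβ hu hv (hαj.trans hjj') hj'β))
  rw [partsMet_append, union_subset_iff] at hwI
  obtain ⟨a, w₀, c, rfl, ha, hfirst⟩ := w₁.exists_eq_append_last_hit (A := (· ∈ P (f j)))
    (mem_partsMet.1 (hR.mem_partsMet_of_le_of_le hf _ hwI.1 hα hj' hu hb hαj hjj'))
  rw [partsMet_append, union_subset_iff] at hwI
  refine ⟨a, b, c, hw.of_append_left.of_append_right, by simp only [length_append]; omega,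
    partsMet_eq_image_Icc hP hR hf c hw.of_append_left.of_append_right hwI.1.2 hj hj' hjj' ha hb
      hfirst fun z hz => hlast z (by simp [hz])⟩

end ContainsContraction

theorem eq_or_eq_of_adj_of_ncard_neighborSet_le_two [Finite ι] {v a b c : ι}
    (hdeg : (R.neighborSet v).ncard ≤ 2) (ha : R.Adj v a) (hb : R.Adj v b) (hab : a ≠ b)
    (hc : R.Adj v c) : c = a ∨ c = b := by
  have hN : ({a, b} : Set ι) = R.neighborSet v :=
    eq_of_subset_of_ncard_le (by simp [insert_subset_iff, ha, hb]) (by rwa [ncard_pair hab])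
  have hc' : c ∈ ({a, b} : Set ι) := hN ▸ hc
  simpa using hc'

structure IsLowDegreePath (R : SimpleGraph ι) (f : ℕ → ι) (ℓ : ℕ) : Prop where
  injOn : InjOn f (Iic ℓ)
  adj : ∀ i < ℓ, R.Adj (f i) (f (i + 1))
  ncard_neighborSet_le : ∀ m, 0 < m → m < ℓ → (R.neighborSet (f m)).ncard ≤ 2

namespace IsLowDegreePath

variable [Finite ι] {ℓ : ℕ}

theorem eq_or_eq_of_adj (hf : IsLowDegreePath R f ℓ) {m : ℕ} (hm : 0 < m) (hmℓ : m < ℓ)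
    {i : ι} (hi : R.Adj (f m) i) : i = f (m - 1) ∨ i = f (m + 1) := by
  have hprev : R.Adj (f m) (f (m - 1)) := by
    simpa [Nat.sub_add_cancel hm] using (hf.adj (m - 1) (by omega)).symm
  refine eq_or_eq_of_adj_of_ncard_neighborSet_le_two (hf.ncard_neighborSet_le m hm hmℓ) hprev
    (hf.adj m hmℓ) (fun h => ?_) hi
  have := hf.injOn (by simp; omega) (by simp; omega) h
  omega

theorem isChordlessOn (hf : IsLowDegreePath R f ℓ) (hI : I ⊆ Iic ℓ) (hends : 0 ∉ I ∨ ℓ ∉ I) :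
    IsChordlessOn R f I where
  injOn := hf.injOn.mono hI
  consecutive_of_adj := by
    have hinterior : ∀ ⦃m m'⦄, m' ∈ I → 0 < m → m < ℓ → R.Adj (f m) (f m') →
        m' = m + 1 ∨ m = m' + 1 := by
      intro m m' hm' h0 hℓ hadj
      have hm'ℓ : m' ≤ ℓ := hI hm'
      rcases hf.eq_or_eq_of_adj h0 hℓ hadj with h | h <;>
        have := hf.injOn hm'ℓ (by simp; omega) h <;> omega
    intro m hm m' hm' hadj
    have hne : m ≠ m' := fun h => hadj.ne (congrArg f h)
    have hmℓ : m ≤ ℓ := hI hm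
    have hm'ℓ : m' ≤ ℓ := hI hm'
    have hends' : (m ≠ 0 ∧ m' ≠ 0) ∨ (m ≠ ℓ ∧ m' ≠ ℓ) := hends.imp
      (fun h => ⟨ne_of_mem_of_not_mem hm h, ne_of_mem_of_not_mem hm' h⟩)
      (fun h => ⟨ne_of_mem_of_not_mem hm h, ne_of_mem_of_not_mem hm' h⟩)
    by_cases hint : 0 < m ∧ m < ℓ
    · exact hinterior hm' hint.1 hint.2 hadj
    · exact (hinterior hm (by omega) (by omega) hadj.symm).symm

theorem exists_crossing (hf : IsLowDegreePath R f ℓ) (hP : Pairwise (Disjoint on P))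
    (hR : G.ContainsContraction P R) {α β x : ℕ} (hx : 0 < x) (hxα : x ≤ α) (hαβ : α + x ≤ β)
    (hβ : β ≤ ℓ) {u v : V} (q : G.Walk u v) (hq : q.IsPath) (hu : u ∈ P (f α))
    (hv : v ∈ P (f β)) :
    ∃ j, j + x ≤ ℓ ∧ ∃ (a b : V) (c : G.Walk a b), c.IsPath ∧ c.length ≤ q.length ∧
      partsMet P c = f '' Icc j (j + x) := by
  have hright : IsChordlessOn R f (Ioc 0 ℓ) :=
    hf.isChordlessOn Ioc_subset_Iic_self (Or.inl fun h => h.1.false)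
  by_cases hqS : partsMet P q ⊆ f '' Ioo 0 ℓ
  · obtain ⟨a, b, c, hc, hlen, hcP⟩ := hR.exists_isPath_partsMet_eq_image_Icc hP hright q hq
      (hqS.trans (image_mono Ioo_subset_Ioc_self)) ⟨by omega, by omega⟩ ⟨by omega, hβ⟩ hu hv le_rfl
      (by omega) hαβ
    exact ⟨α, by omega, a, b, c, hc, hlen, hcP⟩
  obtain ⟨b, e, q₁, q₂, rfl, hbe, heS, hq₁S, -, ⟨m, ⟨hm0, hmℓ⟩, rfl⟩, hadj⟩ :=
    hR.exists_exit (S := f '' Ioo 0 ℓ) q ⟨α, ⟨by omega, by omega⟩, rfl⟩ hu hqS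
  have hq₁ : q₁.IsPath := hq.of_append_left
  have hlen : q₁.length ≤ (q₁.append q₂).length := by simp
  have hq₁I : ∀ {n}, e = f n → partsMet P q₁ ⊆ f '' insert n (Ioo 0 ℓ) := by
    rintro n rfl y hy
    obtain ⟨z, hz, hzy⟩ := mem_partsMet.1 hy
    rw [image_insert_eq]
    by_cases hzb : z = b
    · exact Or.inl (hP.eq (not_disjoint_iff.2 ⟨z, hzy, hzb ▸ hbe⟩))
    · exact Or.inr (hq₁S z hz hzb y hzy)
  -- an `R`-neighbour of an interior part outside the interior is an end of `f`
  have hend : e = f 0 ∨ e = f ℓ := by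
    rcases hf.eq_or_eq_of_adj hm0 hmℓ hadj with rfl | rfl
    · refine Or.inl (congrArg f (by_contra fun h => heS ⟨m - 1, ⟨?_, ?_⟩, rfl⟩)) <;> omega
    · refine Or.inr (congrArg f (by_contra fun h => heS ⟨m + 1, ⟨?_, ?_⟩, rfl⟩)) <;> omega
  rcases hend with rfl | rfl
  · have hleft : IsChordlessOn R f (Iio ℓ) :=
      hf.isChordlessOn Iio_subset_Iic_self (Or.inr fun h => lt_irrefl ℓ h)
    have hq₁I' : partsMet P q₁.reverse ⊆ f '' Iio ℓ := by
      rw [partsMet_reverse]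
      exact (hq₁I rfl).trans (image_mono (insert_subset (by simp; omega) Ioo_subset_Iio_self))
    obtain ⟨a, b, c, hc, hclen, hcP⟩ := hR.exists_isPath_partsMet_eq_image_Icc hP hleft
      q₁.reverse hq₁.reverse hq₁I' (show 0 < ℓ by omega) (show α < ℓ by omega) hbe hu
      (j := 0) (j' := x) le_rfl (by omega) hxα
    refine ⟨0, by omega, a, b, c, hc, by rw [length_reverse] at hclen; omega, ?_⟩
    rwa [zero_add]
  · have hq₁I' : partsMet P q₁ ⊆ f '' Ioc 0 ℓ :=
      (hq₁I rfl).trans (image_mono (insert_subset ⟨by omega, le_rfl⟩ Ioo_subset_Ioc_self))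
    obtain ⟨a, b, c, hc, hclen, hcP⟩ := hR.exists_isPath_partsMet_eq_image_Icc hP hright q₁ hq₁
      hq₁I' ⟨by omega, by omega⟩ ⟨by omega, le_rfl⟩ hu hbe (j := ℓ - x) (j' := ℓ) (by omega)
      (by omega) le_rfl
    refine ⟨ℓ - x, by omega, a, b, c, hc, hclen.trans hlen, ?_⟩
    rwa [Nat.sub_add_cancel (by omega)]

end IsLowDegreePath

end SimpleGraph

theorem low_degree_path_crossing_general {V : Type*}
    (G : SimpleGraph V) (hconn : G.Connected)
    (D : ℕ) (hdiam : ∀ u v, G.dist u v ≤ D)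
    (k : ℕ) (s t : Fin k → V) (p : ∀ i, G.Walk (s i) (t i))
    (hdisj : ∀ i j, i ≠ j → ∀ v ∈ (p i).support, v ∉ (p j).support)
    (R : SimpleGraph (Fin k))
    (hR : ∀ i j, R.Adj i j ↔ i ≠ j ∧ ∃ (a b : V) (w : G.Walk a b),
      a ∈ (p i).support ∧ b ∈ (p j).support ∧
      ∀ v ∈ w.support, v ≠ a → v ≠ b → ∀ y, v ∉ (p y).support)
    (ℓ : ℕ) (hℓ : 9 ≤ ℓ) (f : ℕ → Fin k)
    (hfinj : ∀ i j, i ≤ ℓ → j ≤ ℓ → f i = f j → i = j)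
    (hfadj : ∀ i, i < ℓ → R.Adj (f i) (f (i + 1)))
    (hdeg : ∀ i, i ≤ ℓ → {j | R.Adj (f i) j}.ncard ≤ 2)
    (x : ℕ) (hx : x = 3 * ((ℓ + 8) / 9) - 1) :
    ∃ j, j + x ≤ ℓ ∧ ∃ (a b : V) (w : G.Walk a b), w.IsPath ∧ w.length ≤ D ∧
      ∀ i : Fin k, (∃ v ∈ w.support, v ∈ (p i).support) ↔
        ∃ m ≤ x, i = f (j + m) := by
  set P : Fin k → Set V := fun i => {v | v ∈ (p i).support}
  have hP : Pairwise (Disjoint on P) := fun i j hij => disjoint_left.2 (hdisj i j hij)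
  have hRP : G.ContainsContraction P R :=
    fun i j a b w hij ha hb hw => (hR i j).2 ⟨hij, a, b, w, ha, hb, hw⟩
  have hf : R.IsLowDegreePath f ℓ :=
    ⟨fun i hi j hj => hfinj i j hi hj, hfadj, fun m _ hm => hdeg m hm.le⟩
  obtain ⟨q, hq, hqlen⟩ := hconn.exists_path_of_dist (s (f x)) (s (f (x + x)))
  obtain ⟨j, hj, a, b, c, hc, hclen, hcP⟩ := hf.exists_crossing hP hRP (by omega) le_rfl le_rfl
    (by omega) q hq (p _).start_mem_support (p _).start_mem_support
  refine ⟨j, hj, a, b, c, hc, hclen.trans (hqlen ▸ hdiam _ _), fun i => ?_⟩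
  change i ∈ c.partsMet P ↔ _
  rw [hcP]
  constructor
  · rintro ⟨m, ⟨hjm, hmx⟩, rfl⟩
    exact ⟨m - j, by omega, by rw [Nat.add_sub_cancel' hjm]⟩
  · rintro ⟨m, hm, rfl⟩
    exact ⟨j + m, ⟨by omega, by omega⟩, rfl⟩

/-- Given vertex-disjoint part-paths in a connected graph `G` of diameter `D`,
and a simple path `f₀, …, f_ℓ` (`ℓ ≥ 9`) in the contraction graph `R` all of
whose vertices have `R`-degree at most 2, there is a simple path `w` in `G` of
hop-length at most `D` whose projection to `R` is supported on `f` and which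
intersects exactly `x + 1` part-paths (`x = 3⌈ℓ/9⌉ - 1`), consecutive
along `f`. -/
theorem low_degree_path_crossing {V : Type*} [Fintype V] [DecidableEq V]
    (G : SimpleGraph V) (hconn : G.Connected)
    (D : ℕ) (hdiam : ∀ u v, G.dist u v ≤ D)
    (k : ℕ) (s t : Fin k → V) (p : ∀ i, G.Walk (s i) (t i))
    (hpath : ∀ i, (p i).IsPath)
    (hdisj : ∀ i j, i ≠ j → ∀ v ∈ (p i).support, v ∉ (p j).support)
    (R : SimpleGraph (Fin k))
    (hR : ∀ i j, R.Adj i j ↔ i ≠ j ∧ ∃ (a b : V) (w : G.Walk a b),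
      a ∈ (p i).support ∧ b ∈ (p j).support ∧
      ∀ v ∈ w.support, v ≠ a → v ≠ b → ∀ y, v ∉ (p y).support)
    (ℓ : ℕ) (hℓ : 9 ≤ ℓ) (f : ℕ → Fin k)
    (hfinj : ∀ i j, i ≤ ℓ → j ≤ ℓ → f i = f j → i = j)
    (hfadj : ∀ i, i < ℓ → R.Adj (f i) (f (i + 1)))
    (hdeg : ∀ i, i ≤ ℓ → {j | R.Adj (f i) j}.ncard ≤ 2)
    (x : ℕ) (hx : x = 3 * ((ℓ + 8) / 9) - 1) :
    ∃ j, j + x ≤ ℓ ∧ ∃ (a b : V) (w : G.Walk a b), w.IsPath ∧ w.length ≤ D ∧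
      ∀ i : Fin k, (∃ v ∈ w.support, v ∈ (p i).support) ↔
        ∃ m ≤ x, i = f (j + m) :=
  low_degree_path_crossing_general G hconn D hdiam k s t p hdisj R hR ℓ hℓ f hfinj hfadj hdeg x hx
end

section
/- For every always-correct CONGEST algorithm $\mathcal{A}$ for the MST problem and every graph $G$ of diameter $D \ge 3$ with $n \ge 3$ vertices, there exists a weight assignment on $G$ on which $\mathcal{A}$ requires at least $D/2 - 1$ rounds. Specifically: there exist weighted instances $I$ on $G$ and $I'$ on $G' = G + (s,t)$ (for $s,t$ at distance $D$) that agree on all common edges, such that some edge $e = (u,v)$ at distance at least $D/2 - 1$ from both $s$ and $t$ is in every MST of $(G,I)$ but in no MST of $(G',I')$; hence $v$ cannot decide membership of $e$ in the MST within $D/2 - 2$ rounds. -/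
open scoped Classical

/-!
Fix a shortest `s`–`t` path `p`, cut it at the edge `e = (u, v)` whose endpoint `v` lies at
distance `⌊D/2⌋` from `s`, and price edges as follows: the edges of `p` are free except `e`,
which costs `1`, and every other edge costs `2`; in `G'` the new edge `(s, t)` is free as well.
All spanning trees have `n - 1` edges, so a tree using `k` edges of weight `< 2` weighs
`2 (n - 1 - k) + [e ∈ T]`. In `G`, a spanning tree extending `p` has `k = D`, which a tree
avoiding `e` cannot reach, so every minimum tree contains `e`. In `G'` the edges of weight `< 2`
form the cycle `p + (s, t)`, so every tree has `k ≤ D`; a spanning tree extending the path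
`p + (s, t) - e` attains `k = D` without `e`, so no minimum tree contains `e`.
-/

open Finset

namespace SimpleGraph

variable {V : Type*} {G H : SimpleGraph V}

namespace Walk

lemma exists_eq_append_cons_of_lt_length {u v : V} (p : G.Walk u v) {k : ℕ}
    (hk : k < p.length) :
    ∃ (x y : V) (h : G.Adj x y) (p₁ : G.Walk u x) (p₂ : G.Walk y v),
      p = p₁.append (cons h p₂) ∧ p₁.length = k := by
  induction p generalizing k with
  | nil => simp at hk
  | cons h q ih =>
    cases k with
    | zero => exact ⟨_, _, h, nil, q, rfl, rfl⟩
    | succ k =>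
      obtain ⟨x, y, h', p₁, p₂, rfl, hlen⟩ := ih (by simpa using hk)
      exact ⟨x, y, h', cons h p₁, p₂, rfl, by simp [hlen]⟩

lemma IsCycle.append_comm {u v : V} {p : G.Walk u v} {q : G.Walk v u}
    (h : (p.append q).IsCycle) : (q.append p).IsCycle := by
  rw [isCycle_def, isTrail_def, edges_append, tail_support_append] at h ⊢
  obtain ⟨hedges, hne, hsupport⟩ := h
  refine ⟨List.nodup_append_comm.mp hedges, ?_, List.nodup_append_comm.mp hsupport⟩
  rw [Ne, eq_nil_iff_nil, ← length_eq_zero_iff, length_append] at hne ⊢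
  omega

lemma IsPath.isCycle_cons_append_cons {s t u v : V} {p₁ : G.Walk s u} {h : G.Adj u v}
    {p₂ : G.Walk v t} (hp : (p₁.append (cons h p₂)).IsPath) (hts : G.Adj t s)
    (hts_notMem : s(t, s) ∉ (p₁.append (cons h p₂)).edges) :
    (cons h (p₂.append (cons hts p₁))).IsCycle :=
  IsCycle.append_comm (p := cons hts p₁) ((cons_isCycle_iff _ hts).mpr ⟨hp, hts_notMem⟩)

lemma IsPath.isAcyclic_fromEdgeSet {u v : V} {p : G.Walk u v} (hp : p.IsPath) :
    (fromEdgeSet p.edgeSet).IsAcyclic := by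
  induction p with
  | nil => simp
  | @cons a x b h q ih =>
    rw [cons_isPath_iff] at hp
    have hsplit : fromEdgeSet (cons h q).edgeSet = fromEdgeSet q.edgeSet ⊔ edge a x := by
      rw [edgeSet_cons, edge, ← fromEdgeSet_union, Set.union_singleton]
    rw [hsplit]
    -- `a` is isolated in the graph of `q`, so it cannot reach `x` there
    refine (ih hp.1).sup_edge_of_not_reachable fun ⟨w⟩ => hp.2 ?_
    cases w with
    | nil => exact absurd rfl h.ne
    | cons h' _ => exact q.fst_mem_support_of_mem_edges ((fromEdgeSet_adj _).mp h').1

lemma IsPath.exists_isTree_edgeSet_subset (hH : H.Connected) {u v : V} {p : H.Walk u v}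
    (hp : p.IsPath) : ∃ T ≤ H, T.IsTree ∧ p.edgeSet ⊆ T.edgeSet := by
  have hpH : fromEdgeSet p.edgeSet ≤ H :=
    (fromEdgeSet_le _).mpr fun e he => p.edges_subset_edgeSet he.1
  obtain ⟨T, hpT, hTH, hT⟩ := hH.exists_isTree_le_of_le_of_isAcyclic hpH hp.isAcyclic_fromEdgeSet
  refine ⟨T, hTH, hT, fun e he => edgeSet_mono hpT ?_⟩
  rw [edgeSet_fromEdgeSet]
  exact ⟨he, not_isDiag_of_mem_edgeSet _ (p.edges_subset_edgeSet he)⟩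

end Walk

lemma IsAcyclic.exists_mem_edges_notMem_edgeSet {T : SimpleGraph V} (hT : T.IsAcyclic) {u : V}
    {c : H.Walk u u} (hc : c.IsCycle) : ∃ e ∈ c.edges, e ∉ T.edgeSet := by
  by_contra! h
  exact hT (c.transfer T h) (hc.transfer h)

section MinSpanningTree

variable [DecidableEq V]

def edgeWeight (C : Finset (Sym2 V)) (e₀ e : Sym2 V) : ℕ :=
  (if e ∈ C then 0 else 2) + if e = e₀ then 1 else 0

lemma sum_edgeWeight_add (C E : Finset (Sym2 V)) (e₀ : Sym2 V) :
    ∑ e ∈ E, edgeWeight C e₀ e + 2 * #{e ∈ E | e ∈ C} = 2 * #E + if e₀ ∈ E then 1 else 0 := by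
  have hsplit := card_filter_add_card_filter_not (s := E) (fun e => e ∈ C)
  simp only [edgeWeight, sum_add_distrib, sum_ite_eq', sum_ite, sum_const_zero, sum_const,
    smul_eq_mul, zero_add]
  omega

variable [Fintype V]

noncomputable def treeWeight (w : Sym2 V → ℕ) (T : SimpleGraph V) : ℕ :=
  ∑ e ∈ univ.filter (fun e => e ∈ T.edgeSet), w e

def IsMinSpanningTree (w : Sym2 V → ℕ) (H T : SimpleGraph V) : Prop :=
  T ≤ H ∧ T.IsTree ∧ ∀ T' ≤ H, T'.IsTree → treeWeight w T ≤ treeWeight w T'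

lemma IsTree.treeWeight_edgeWeight_add {T : SimpleGraph V} (hT : T.IsTree)
    (C : Finset (Sym2 V)) (e₀ : Sym2 V) :
    treeWeight (edgeWeight C e₀) T + 2 * #{e ∈ C | e ∈ T.edgeSet} + 2 =
      2 * Fintype.card V + if e₀ ∈ T.edgeSet then 1 else 0 := by
  have hcard := hT.card_edgeFinset
  have hE : univ.filter (fun e => e ∈ T.edgeSet) = T.edgeFinset := by ext; simp
  have hEC : {e ∈ T.edgeFinset | e ∈ C} = {e ∈ C | e ∈ T.edgeSet} := by ext; simp [and_comm]
  have hsum := sum_edgeWeight_add C T.edgeFinset e₀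
  rw [treeWeight, hE, ← hEC]
  simp only [mem_edgeFinset] at hsum
  omega

theorem IsMinSpanningTree.mem_edgeSet_of_mem_edges (hH : H.Connected) {u v : V}
    {p : H.Walk u v} (hp : p.IsPath) {e₀ : Sym2 V} (he₀ : e₀ ∈ p.edges) {T : SimpleGraph V}
    (hT : IsMinSpanningTree (edgeWeight p.edges.toFinset e₀) H T) : e₀ ∈ T.edgeSet := by
  obtain ⟨-, hTtree, hTmin⟩ := hT
  by_contra he₀T
  obtain ⟨T₀, hT₀H, hT₀, hpT₀⟩ := hp.exists_isTree_edgeSet_subset hH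
  have hP : {e ∈ p.edges.toFinset | e ∈ T₀.edgeSet} = p.edges.toFinset :=
    filter_true_of_mem fun e he => hpT₀ (List.mem_toFinset.mp he)
  have hmiss : #{e ∈ p.edges.toFinset | e ∈ T.edgeSet} < #p.edges.toFinset :=
    card_lt_card <| filter_ssubset.mpr ⟨e₀, List.mem_toFinset.mpr he₀, he₀T⟩
  have hle := hTmin T₀ hT₀H hT₀
  have h₀ := hT₀.treeWeight_edgeWeight_add p.edges.toFinset e₀
  have h := hTtree.treeWeight_edgeWeight_add p.edges.toFinset e₀
  rw [hP, if_pos (hpT₀ he₀)] at h₀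
  rw [if_neg he₀T] at h
  omega

theorem IsMinSpanningTree.notMem_edgeSet_of_isCycle (hH : H.Connected) {u x : V}
    {h : H.Adj u x} {q : H.Walk x u} (hc : (Walk.cons h q).IsCycle) {T : SimpleGraph V}
    (hT : IsMinSpanningTree (edgeWeight (Walk.cons h q).edges.toFinset s(u, x)) H T) :
    s(u, x) ∉ T.edgeSet := by
  obtain ⟨-, hTtree, hTmin⟩ := hT
  intro he₀T
  set C := (Walk.cons h q).edges.toFinset
  obtain ⟨T₁, hT₁H, hT₁, hqT₁⟩ :=
    ((Walk.cons_isCycle_iff q h).mp hc).1.exists_isTree_edgeSet_subset hH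
  have he₀T₁ : s(u, x) ∉ T₁.edgeSet := by
    obtain ⟨f, hf, hfT₁⟩ := hT₁.isAcyclic.exists_mem_edges_notMem_edgeSet hc
    rw [Walk.edges_cons, List.mem_cons] at hf
    rcases hf with rfl | hf
    · exact hfT₁
    · exact absurd (hqT₁ hf) hfT₁
  have hT₁C : C.erase s(u, x) ⊆ {e ∈ C | e ∈ T₁.edgeSet} := by
    intro e he
    rw [mem_erase, List.mem_toFinset, Walk.edges_cons, List.mem_cons] at he
    simp [C, hqT₁ (he.2.resolve_left he.1), he.2]
  have hTC : #{e ∈ C | e ∈ T.edgeSet} < #C := by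
    obtain ⟨f, hf, hfT⟩ := hTtree.isAcyclic.exists_mem_edges_notMem_edgeSet hc
    exact card_lt_card <| filter_ssubset.mpr ⟨f, List.mem_toFinset.mpr hf, hfT⟩
  have hT₁card := card_le_card hT₁C
  rw [card_erase_of_mem (by simp [C])] at hT₁card
  have hle := hTmin T₁ hT₁H hT₁
  have h₁ := hT₁.treeWeight_edgeWeight_add C s(u, x)
  have h := hTtree.treeWeight_edgeWeight_add C s(u, x)
  rw [if_neg he₀T₁] at h₁
  rw [if_pos he₀T] at h
  omega

end MinSpanningTree

end SimpleGraph

open SimpleGraph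

theorem mst_diameter_lower_bound_core_general {V : Type*} [Fintype V] [DecidableEq V]
    (G : SimpleGraph V) (hconn : G.Connected)
    (D : ℕ) (hD : 3 ≤ D) (s t : V) (hst : G.dist s t = D) :
    ∃ (wt wt' : Sym2 V → ℕ) (u v : V),
      (∀ e ∈ G.edgeSet, wt e = wt' e) ∧
      G.Adj u v ∧
      D ≤ 2 * G.dist v s + 2 ∧ D ≤ 2 * G.dist v t + 2 ∧
      (∀ T : SimpleGraph V, T ≤ G → T.Connected → T.IsAcyclic →
        (∀ T' : SimpleGraph V, T' ≤ G → T'.Connected → T'.IsAcyclic →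
          ∑ e ∈ Finset.univ.filter (fun e => e ∈ T.edgeSet), wt e ≤
            ∑ e ∈ Finset.univ.filter (fun e => e ∈ T'.edgeSet), wt e) →
        T.Adj u v) ∧
      (∀ T : SimpleGraph V,
        T ≤ G ⊔ SimpleGraph.fromEdgeSet {s(s, t)} → T.Connected → T.IsAcyclic →
        (∀ T' : SimpleGraph V, T' ≤ G ⊔ SimpleGraph.fromEdgeSet {s(s, t)} →
          T'.Connected → T'.IsAcyclic →
          ∑ e ∈ Finset.univ.filter (fun e => e ∈ T.edgeSet), wt' e ≤
            ∑ e ∈ Finset.univ.filter (fun e => e ∈ T'.edgeSet), wt' e) →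
        ¬ T.Adj u v) := by
  obtain ⟨p, hp, hpD⟩ := hconn.exists_path_of_dist s t
  obtain ⟨u, v, huv, p₁, p₂, rfl, hp₁⟩ :=
    p.exists_eq_append_cons_of_lt_length (k := D / 2 - 1) (by omega)
  have hlen : p₁.length + 1 + p₂.length = D := by
    rw [Walk.length_append, Walk.length_cons, hst] at hpD
    omega
  have hsv : G.dist s v ≤ p₁.length + 1 := by simpa using dist_le (p₁.concat huv)
  have hvt : G.dist v t ≤ p₂.length := dist_le p₂
  have htri : D ≤ G.dist s v + G.dist v t := hst ▸ hconn.dist_triangle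
  have hst_not_adj : ¬ G.Adj s t := fun h => by rw [dist_eq_one_iff_adj.mpr h] at hst; omega
  set G' := G ⊔ fromEdgeSet {s(s, t)}
  have hGG' : G ≤ G' := le_sup_left
  have hts : G'.Adj t s := Or.inr ⟨Sym2.eq_swap, fun h => by rw [h, dist_self] at hst; omega⟩
  set c := Walk.cons (hGG' huv) ((p₂.mapLe hGG').append (Walk.cons hts (p₁.mapLe hGG')))
  have hc : c.IsCycle :=
    Walk.IsPath.isCycle_cons_append_cons (by simpa using hp.mapLe hGG') hts fun h =>
      hst_not_adj (Walk.adj_of_mem_edges (p₁.append (Walk.cons huv p₂)) (by simpa using h)).symm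
  refine ⟨edgeWeight (p₁.append (Walk.cons huv p₂)).edges.toFinset s(u, v),
    edgeWeight c.edges.toFinset s(u, v), u, v, fun e he => ?_, huv,
    by rw [SimpleGraph.dist_comm]; omega, by omega, fun T hTG hTc hTa hmin => ?_,
    fun T hTG hTc hTa hmin => ?_⟩
  · have hne : e ≠ s(t, s) := by rintro rfl; exact hst_not_adj (G.mem_edgeSet.mp he).symm
    simp [c, edgeWeight, hne, or_comm]
  · exact IsMinSpanningTree.mem_edgeSet_of_mem_edges hconn hp (by simp)
      ⟨hTG, ⟨hTc, hTa⟩, fun T' hT'G hT' => hmin T' hT'G hT'.1 hT'.2⟩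
  · exact IsMinSpanningTree.notMem_edgeSet_of_isCycle (hconn.mono hGG') hc
      ⟨hTG, ⟨hTc, hTa⟩, fun T' hT'G hT' => hmin T' hT'G hT'.1 hT'.2⟩

/-- Combinatorial core of the `Ω(D)` universal MST lower bound: on any
connected graph `G` of diameter `D ≥ 3` (with `n ≥ 3` vertices, `s, t` at
distance `D`), there are weights `wt` on `G` and `wt'` on `G' = G + (s,t)`
agreeing on all common edges, and an edge `(u,v)` with `v` at distance at
least `D/2 - 1` from both `s` and `t`, such that `(u,v)` is in every MST of
`(G, wt)` but in no MST of `(G', wt')`. -/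
theorem mst_diameter_lower_bound_core {V : Type*} [Fintype V] [DecidableEq V]
    (G : SimpleGraph V) (hcard : 3 ≤ Fintype.card V) (hconn : G.Connected)
    (D : ℕ) (hD : 3 ≤ D) (s t : V) (hst : G.dist s t = D)
    (hdiam : ∀ u v, G.dist u v ≤ D) :
    ∃ (wt wt' : Sym2 V → ℕ) (u v : V),
      (∀ e ∈ G.edgeSet, wt e = wt' e) ∧
      G.Adj u v ∧
      D ≤ 2 * G.dist v s + 2 ∧ D ≤ 2 * G.dist v t + 2 ∧
      (∀ T : SimpleGraph V, T ≤ G → T.Connected → T.IsAcyclic →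
        (∀ T' : SimpleGraph V, T' ≤ G → T'.Connected → T'.IsAcyclic →
          ∑ e ∈ Finset.univ.filter (fun e => e ∈ T.edgeSet), wt e ≤
            ∑ e ∈ Finset.univ.filter (fun e => e ∈ T'.edgeSet), wt e) →
        T.Adj u v) ∧
      (∀ T : SimpleGraph V,
        T ≤ G ⊔ SimpleGraph.fromEdgeSet {s(s, t)} → T.Connected → T.IsAcyclic →
        (∀ T' : SimpleGraph V, T' ≤ G ⊔ SimpleGraph.fromEdgeSet {s(s, t)} →
          T'.Connected → T'.IsAcyclic →
          ∑ e ∈ Finset.univ.filter (fun e => e ∈ T.edgeSet), wt' e ≤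
            ∑ e ∈ Finset.univ.filter (fun e => e ∈ T'.edgeSet), wt' e) →
        ¬ T.Adj u v) :=
  mst_diameter_lower_bound_core_general G hconn D hD s t hst
end
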